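/- Let f : {-1,1}^n → {1,...,n}, let F_{ij} = E[Y_i · 1{f(Y)=j}] for Y uniform on {-1,1}^n, and let α_j = Pr[f(Y)=j]. Suppose Pr[f(Y) ∉ Ω] ≥ 0.009079 where Ω is a set of 8 indices j with the largest values of α_j (or all indices if n < 8). Then Σ_{i,j=1}^n F_{ij}² < 0.4962357. -/

import Mathlib

open Finset Real
open scoped Classical

/-- The real value of a coordinate: `true ↦ 1`, `false ↦ -1`, encoding `{-1,1}`. -/
noncomputable def chi (b : Bool) : ℝ := if b then 1 else -1

/-- Expectation with respect to the uniform measure on `{-1,1}^n`. -/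
noncomputable def Ex (n : ℕ) (φ : (Fin n → Bool) → ℝ) : ℝ :=
  (∑ x : Fin n → Bool, φ x) / 2 ^ n

/-- Probability with respect to the uniform measure on `{-1,1}^n`. -/
noncomputable def Pr (n : ℕ) (p : (Fin n → Bool) → Prop) : ℝ :=
  Ex n (fun x => if p x then 1 else 0)

/-- Expectation for two independent uniform vectors on `{-1,1}^n`. -/
noncomputable def Ex2 (n : ℕ) (φ : (Fin n → Bool) → (Fin n → Bool) → ℝ) : ℝ :=
  (∑ x : Fin n → Bool, ∑ y : Fin n → Bool, φ x y) / 2 ^ (2 * n)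

/-- Probability for two independent uniform vectors on `{-1,1}^n`. -/
noncomputable def Pr2 (n : ℕ) (p : (Fin n → Bool) → (Fin n → Bool) → Prop) : ℝ :=
  Ex2 n (fun x y => if p x y then 1 else 0)

/-- Fourier coefficient `ĥ(S) = E[h(X)·∏_{i∈S} X_i]`. -/
noncomputable def coeff (n : ℕ) (h : (Fin n → Bool) → ℝ) (S : Finset (Fin n)) : ℝ :=
  Ex n (fun x => h x * ∏ i ∈ S, chi (x i))

/-- Pointwise negation `x ↦ -x` on `{-1,1}^n`. -/
def neg (n : ℕ) (x : Fin n → Bool) : Fin n → Bool := fun i => !(x i)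

/-!
Write `W j = ∑ i, F i j ^ 2` for the level-one weight of the fibre `{f = j}`; the `a j` sum to `1`.
Each fibre satisfies `W j ≤ a j / 2` (Cauchy–Schwarz against the positive part of its level-one
linear form) and Chang's level-one bound `W j ≤ 2 α² log (1 / α)` for `α = a j`, proved here
through subadditivity of entropy and the binary Pinsker inequality. Hence `∑ W j = 1/2 - ∑ D j`
with deficits `D j = a j / 2 - W j ≥ 0`, and a total deficit above `0.0037643` is needed.

Let `a j₀` be the largest probability outside `Ω`. If `a j₀ ≤ 0.009079`, each `j ∉ Ω` has deficit
at least a fixed multiple of `a j`, and these `a j` add up to at least `0.009079`. If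
`0.009079 < a j₀ ≤ 0.1`, convexity of `α ↦ 2 α² log (1 / α)` bounds the deficit at `j₀` alone by
its values at the two endpoints. Otherwise `Ω` and `j₀` give nine probabilities above `0.1` of
total mass at most `1`, and convexity on `[0.1, 0.115]` gives deficits `D j ≥ (0.115 - a j) / 4`.
-/

lemma sum_eq_zero_of_comp_eq_neg {α : Type*} [Fintype α] (σ : α ≃ α) {g : α → ℝ}
    (hg : ∀ x, g (σ x) = -g x) : ∑ x, g x = 0 := by
  have h := σ.sum_comp g
  simp only [hg, sum_neg_distrib] at h
  linarith

lemma card_mul_log_card_le {α : Type*} (A : Finset α) {q : α → ℝ} (hq : ∀ x ∈ A, 0 < q x)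
    (hsum : ∑ x ∈ A, q x ≤ 1) : #A * log #A ≤ -∑ x ∈ A, log (q x) := by
  have hlog : ∀ x ∈ A, log #A + log (q x) ≤ #A * q x - 1 := fun x hx => by
    have hA : (0 : ℝ) < #A := by exact_mod_cast card_pos.mpr ⟨x, hx⟩
    rw [← log_mul hA.ne' (hq x hx).ne']
    exact log_le_sub_one_of_pos (mul_pos hA (hq x hx))
  have h := sum_le_sum hlog
  rw [sum_add_distrib, sum_const, sum_sub_distrib, ← mul_sum, sum_const, nsmul_eq_mul,
    nsmul_eq_mul, mul_one] at h
  nlinarith [(Nat.cast_nonneg #A : (0 : ℝ) ≤ #A)]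

lemma convexOn_log_two_sub_binEntropy_sub_sq :
    ConvexOn ℝ (Set.Icc 0 1) fun p => log 2 - binEntropy p - (2 * p - 1) ^ 2 / 2 := by
  refine convexOn_of_hasDerivWithinAt2_nonneg (convex_Icc 0 1) (by fun_prop)
    (f' := fun p => log p - log (1 - p) - 2 * (2 * p - 1)) (f'' := fun p => p⁻¹ + (1 - p)⁻¹ - 4)
    ?_ ?_ ?_ <;> intro p hp <;> rw [interior_Icc] at hp <;> obtain ⟨hp0, hp1⟩ := hp
  · have h := ((hasDerivAt_binEntropy hp0.ne' (by linarith)).const_sub (log 2)).sub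
      ((((hasDerivAt_id p).const_mul 2).sub_const 1).pow 2 |>.div_const 2)
    exact (h.congr_deriv (by simp)).hasDerivWithinAt
  · have h1 := ((hasDerivAt_id p).const_sub 1).log (by simp; linarith)
    have h := ((hasDerivAt_log hp0.ne').sub h1).sub (((hasDerivAt_id p).const_mul 2).sub_const 1
      |>.const_mul 2)
    exact (h.congr_deriv (by simp; ring)).hasDerivWithinAt
  · have h4 : 4 ≤ p⁻¹ + (1 - p)⁻¹ := by
      rw [inv_add_inv hp0.ne' (by linarith), le_div_iff₀ (by nlinarith)]
      nlinarith [sq_nonneg (2 * p - 1)]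
    linarith

lemma sq_two_mul_sub_one_le_binEntropy {p : ℝ} (hp0 : 0 ≤ p) (hp1 : p ≤ 1) :
    (2 * p - 1) ^ 2 ≤ 2 * (log 2 - binEntropy p) := by
  have h := convexOn_log_two_sub_binEntropy_sub_sq.2 (⟨hp0, hp1⟩ : p ∈ Set.Icc 0 1)
    (⟨by linarith, by linarith⟩ : 1 - p ∈ Set.Icc 0 1) (by norm_num : (0 : ℝ) ≤ 1 / 2)
    (by norm_num : (0 : ℝ) ≤ 1 / 2) (by norm_num)
  have hmid : (1 / 2 : ℝ) • p + (1 / 2 : ℝ) • (1 - p) = 2⁻¹ := by simp only [smul_eq_mul]; ring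
  rw [hmid] at h
  simp only [binEntropy_two_inv, binEntropy_one_sub, smul_eq_mul] at h
  nlinarith

lemma ConvexOn.lt_of_lt_affine {s : Set ℝ} {f : ℝ → ℝ} (hf : ConvexOn ℝ s f) {x y z a b : ℝ}
    (hx : x ∈ s) (hy : y ∈ s) (hxz : x ≤ z) (hzy : z ≤ y) (hfx : f x < a * x + b)
    (hfy : f y < a * y + b) : f z < a * z + b := by
  have hg : ConvexOn ℝ s fun t => f t - (a * t + b) :=
    hf.sub (((LinearMap.mulLeft ℝ a).concaveOn hf.1).add_const b)
  have := hg.le_on_segment hx hy (by rw [segment_eq_Icc (hxz.trans hzy)]; exact ⟨hxz, hzy⟩)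
  have := max_lt (sub_neg.2 hfx) (sub_neg.2 hfy)
  linarith

lemma neg_log_le_of_inv_le_exp {c L : ℝ} (hc : 0 < c) (h : c⁻¹ ≤ exp L) : -log c ≤ L := by
  rw [← log_inv]
  exact (log_le_iff_le_exp (inv_pos.2 hc)).2 h

lemma pow_mul_sum_le_exp (k N : ℕ) {r : ℝ} (hr : 0 ≤ r) :
    2.7182818283 ^ k * ∑ m ∈ range N, r ^ m / m.factorial ≤ exp (k + r) := by
  rw [exp_add, ← exp_one_pow]
  exact mul_le_mul (pow_le_pow_left₀ (by norm_num) exp_one_gt_d9.le k)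
    (sum_le_exp_of_nonneg hr N) (sum_nonneg fun m _ => by positivity) (by positivity)

lemma neg_log_le_4702 : -log 0.009079 ≤ 4.702 := by
  refine neg_log_le_of_inv_le_exp (by norm_num) ?_
  have h := pow_mul_sum_le_exp 4 6 (r := 0.702) (by norm_num)
  norm_num [sum_range_succ, Nat.factorial] at h ⊢
  linarith

lemma neg_log_le_231 : -log 0.1 ≤ 2.31 := by
  refine neg_log_le_of_inv_le_exp (by norm_num) ?_
  have h := pow_mul_sum_le_exp 2 3 (r := 0.31) (by norm_num)
  norm_num [sum_range_succ, Nat.factorial] at h ⊢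
  linarith

lemma neg_log_le_217 : -log 0.115 ≤ 2.17 := by
  refine neg_log_le_of_inv_le_exp (by norm_num) ?_
  have h := pow_mul_sum_le_exp 2 3 (r := 0.17) (by norm_num)
  norm_num [sum_range_succ, Nat.factorial] at h ⊢
  linarith

lemma monotoneOn_negMulLog : MonotoneOn negMulLog (Set.Icc 0 (exp (-1))) := by
  refine monotoneOn_of_deriv_nonneg (convex_Icc _ _) continuous_negMulLog.continuousOn
    (differentiableOn_negMulLog.mono fun x hx => ?_) fun x hx => ?_ <;>
    rw [interior_Icc] at hx <;> obtain ⟨hx0, hx1⟩ := hx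
  · exact hx0.ne'
  · rw [deriv_negMulLog hx0.ne']
    linarith [(log_lt_iff_lt_exp hx0).2 hx1]

/-- Chang's level-one bound `2 α² log (1 / α)`. -/
noncomputable def changBound (α : ℝ) : ℝ := 2 * α * negMulLog α

lemma changBound_le_of_le {α β : ℝ} (hα : 0 ≤ α) (hαβ : α ≤ β) (hβ : β ≤ exp (-1)) :
    changBound α ≤ 2 * negMulLog β * α := by
  have := monotoneOn_negMulLog ⟨hα, hαβ.trans hβ⟩ ⟨hα.trans hαβ, hβ⟩ hαβ
  unfold changBound
  nlinarith

lemma changBound_le_of_neg_log_le {α L : ℝ} (h : -log α ≤ L) :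
    changBound α ≤ 2 * α ^ 2 * L := by
  unfold changBound negMulLog
  nlinarith [mul_nonneg (sq_nonneg α) (sub_nonneg.2 h)]

lemma convexOn_changBound : ConvexOn ℝ (Set.Icc 0 (exp (-3 / 2))) changBound := by
  refine convexOn_of_hasDerivWithinAt2_nonneg (convex_Icc _ _)
    (by unfold changBound; fun_prop) (f' := fun x => 2 * negMulLog x - 2 * x * (log x + 1))
    (f'' := fun x => -4 * log x - 6) ?_ ?_ ?_ <;>
    intro x hx <;> rw [interior_Icc] at hx <;> obtain ⟨hx0, hx1⟩ := hx
  · have h := ((hasDerivAt_id x).const_mul 2).mul (hasDerivAt_negMulLog hx0.ne')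
    exact (h.congr_deriv (by simp; ring)).hasDerivWithinAt
  · have h := ((hasDerivAt_negMulLog hx0.ne').const_mul 2).sub
      (((hasDerivAt_id x).const_mul 2).mul ((hasDerivAt_log hx0.ne').add_const 1))
    exact (h.congr_deriv (by simp only [id]; field_simp; ring)).hasDerivWithinAt
  · linarith [(log_lt_iff_lt_exp hx0).2 hx1]

lemma changBound_le_linear_of_le {α : ℝ} (h0 : 0 ≤ α) (h : α ≤ 0.009079) :
    changBound α ≤ 2 * (0.009079 * 4.702) * α := by
  have hε := changBound_le_of_le h0 h (by linarith [exp_neg_one_gt_d9])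
  have hlog : negMulLog 0.009079 ≤ 0.009079 * 4.702 := by
    rw [negMulLog, neg_mul, ← mul_neg]
    linarith [neg_log_le_4702]
  nlinarith

lemma convexOn_changBound_Icc : ConvexOn ℝ (Set.Icc 0 0.115) changBound := by
  have h : exp (-2) ≤ exp (-3 / 2) := exp_le_exp.2 (by norm_num)
  have h2 : exp (-2) = exp (-1) ^ 2 := by rw [← exp_nat_mul]; norm_num
  refine convexOn_changBound.subset (Set.Icc_subset_Icc le_rfl ?_) (convex_Icc _ _)
  nlinarith [exp_neg_one_gt_d9]

lemma changBound_lt_half_sub_const {α : ℝ} (h1 : 0.009079 ≤ α) (h2 : α ≤ 0.1) :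
    changBound α < α / 2 - 0.0037643 := by
  have := convexOn_changBound_Icc.lt_of_lt_affine (by norm_num) (by norm_num) h1 h2
    (a := 1 / 2) (b := -0.0037643)
    (by linarith [changBound_le_of_neg_log_le neg_log_le_4702])
    (by linarith [changBound_le_of_neg_log_le neg_log_le_231])
  linarith

lemma changBound_lt_half_sub_linear {α : ℝ} (h1 : 0.1 ≤ α) (h2 : α ≤ 0.115) :
    changBound α < α / 2 - (0.115 - α) / 4 := by
  have := convexOn_changBound_Icc.lt_of_lt_affine (by norm_num) (by norm_num) h1 h2
    (a := 3 / 4) (b := -0.115 / 4)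
    (by linarith [changBound_le_of_neg_log_le neg_log_le_231])
    (by linarith [changBound_le_of_neg_log_le neg_log_le_217])
  linarith

section Deficit

variable {ι : Type*} {a W : ι → ℝ}

lemma lt_sum_half_sub_of_le {s : Finset ι} (ha : ∀ j ∈ s, 0 ≤ a j)
    (hsmall : ∀ j ∈ s, a j ≤ 0.009079) (hchang : ∀ j ∈ s, W j ≤ changBound (a j))
    (hmass : 0.009079 ≤ ∑ j ∈ s, a j) : 0.0037643 < ∑ j ∈ s, (a j / 2 - W j) := calc
  (0.0037643 : ℝ) < (1 / 2 - 2 * (0.009079 * 4.702)) * 0.009079 := by norm_num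
  _ ≤ ∑ j ∈ s, (1 / 2 - 2 * (0.009079 * 4.702)) * a j := by
    rw [← mul_sum]; gcongr
  _ ≤ ∑ j ∈ s, (a j / 2 - W j) := sum_le_sum fun j hj => by
    linarith [hchang j hj, changBound_le_linear_of_le (ha j hj) (hsmall j hj)]

lemma lt_sum_half_sub_of_card_eq_nine {s : Finset ι} (hs : #s = 9) (hmass : ∑ j ∈ s, a j ≤ 1)
    (hlarge : ∀ j ∈ s, 0.1 ≤ a j) (hhalf : ∀ j ∈ s, W j ≤ a j / 2)
    (hchang : ∀ j ∈ s, W j ≤ changBound (a j)) : 0.0037643 < ∑ j ∈ s, (a j / 2 - W j) := calc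
  (0.0037643 : ℝ) < ∑ j ∈ s, (0.115 - a j) / 4 := by
    rw [← sum_div, sum_sub_distrib, sum_const, hs]
    norm_num
    linarith
  _ ≤ ∑ j ∈ s, (a j / 2 - W j) := sum_le_sum fun j hj => by
    rcases le_or_gt (a j) 0.115 with h | h
    · linarith [hchang j hj, changBound_lt_half_sub_linear (hlarge j hj) h]
    · linarith [hhalf j hj]

theorem sum_lt_of_le_half_of_le_changBound [Fintype ι] [DecidableEq ι] (ha : ∀ j, 0 ≤ a j)
    (hsum : ∑ j, a j = 1) (hhalf : ∀ j, W j ≤ a j / 2) (hchang : ∀ j, W j ≤ changBound (a j))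
    {Ω : Finset ι} (hcard : #Ω = min 8 (Fintype.card ι))
    (hlargest : ∀ j ∈ Ω, ∀ j' ∉ Ω, a j' ≤ a j) (hmiss : 0.009079 ≤ ∑ j ∈ Ωᶜ, a j) :
    ∑ j, W j < 0.4962357 := by
  suffices ∃ s : Finset ι, 0.0037643 < ∑ j ∈ s, (a j / 2 - W j) by
    obtain ⟨s, hs⟩ := this
    have := sum_le_sum_of_subset_of_nonneg (subset_univ s) fun j _ _ => sub_nonneg.2 (hhalf j)
    rw [sum_sub_distrib (s := univ), ← sum_div, hsum] at this
    linarith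
  have htail : Ωᶜ.Nonempty := nonempty_of_sum_ne_zero (f := a) (by linarith)
  obtain ⟨j₀, hj₀, hmax⟩ := exists_max_image Ωᶜ a htail
  rcases le_or_gt (a j₀) 0.009079 with hsmall | hbig
  · exact ⟨Ωᶜ, lt_sum_half_sub_of_le (fun j _ => ha j) (fun j hj => (hmax j hj).trans hsmall)
      (fun j _ => hchang j) hmiss⟩
  rcases le_or_gt (a j₀) 0.1 with hmid | hlarge
  · refine ⟨{j₀}, ?_⟩
    rw [sum_singleton]
    linarith [hchang j₀, changBound_lt_half_sub_const hbig.le hmid]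
  have hj₀Ω : j₀ ∉ Ω := mem_compl.mp hj₀
  have hΩ : #Ω = 8 := by
    have := card_pos.mpr htail
    rw [card_compl] at this
    omega
  refine ⟨insert j₀ Ω, lt_sum_half_sub_of_card_eq_nine (by rw [card_insert_of_notMem hj₀Ω, hΩ])
    ?_ (fun j hj => ?_) (fun j _ => hhalf j) (fun j _ => hchang j)⟩
  · rw [← hsum]
    exact sum_le_sum_of_subset_of_nonneg (subset_univ _) fun j _ _ => ha j
  · rcases mem_insert.mp hj with rfl | hj
    · exact hlarge.le
    · exact hlarge.le.trans (hlargest j hj j₀ hj₀Ω)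

end Deficit

namespace BoolCube

variable {n : ℕ}

lemma chi_mul_self (b : Bool) : chi b * chi b = 1 := by cases b <;> norm_num [chi]

lemma chi_not (b : Bool) : chi (!b) = -chi b := by cases b <;> norm_num [chi]

def flipAt (i : Fin n) : (Fin n → Bool) ≃ (Fin n → Bool) :=
  Function.Involutive.toPerm (fun x => Function.update x i (!x i)) fun x => by simp

lemma flipAt_apply (i : Fin n) (x : Fin n → Bool) :
    flipAt i x = Function.update x i (!x i) := rfl

def negEquiv (n : ℕ) : (Fin n → Bool) ≃ (Fin n → Bool) :=
  Function.Involutive.toPerm (neg n) fun x => by funext i; simp [neg]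

lemma negEquiv_apply (x : Fin n → Bool) : negEquiv n x = neg n x := rfl

lemma sum_chi_mul_chi (i k : Fin n) :
    ∑ x : Fin n → Bool, chi (x i) * chi (x k) = if i = k then 2 ^ n else 0 := by
  split_ifs with hik
  · simp [hik, chi_mul_self]
  · refine sum_eq_zero_of_comp_eq_neg (flipAt i) fun x => ?_
    simp [flipAt_apply, Function.update_of_ne (Ne.symm hik), chi_not]

lemma sum_linear_sq (c : Fin n → ℝ) :
    ∑ x : Fin n → Bool, (∑ i, c i * chi (x i)) ^ 2 = 2 ^ n * ∑ i, c i ^ 2 := by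
  calc ∑ x : Fin n → Bool, (∑ i, c i * chi (x i)) ^ 2
      = ∑ x : Fin n → Bool, ∑ i, ∑ k, c i * c k * (chi (x i) * chi (x k)) := by
        simp_rw [sq, sum_mul_sum]
        exact sum_congr rfl fun x _ => sum_congr rfl fun i _ => sum_congr rfl fun k _ => by ring
    _ = ∑ i, ∑ k, c i * c k * ∑ x : Fin n → Bool, chi (x i) * chi (x k) := by
        simp_rw [mul_sum]
        rw [sum_comm]
        exact sum_congr rfl fun i _ => sum_comm
    _ = 2 ^ n * ∑ i, c i ^ 2 := by
        simp [sum_chi_mul_chi, mul_sum, sq, mul_comm]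

lemma sum_max_sq_of_odd {φ : (Fin n → Bool) → ℝ} (hφ : ∀ x, φ (neg n x) = -φ x) :
    2 * ∑ x, max (φ x) 0 ^ 2 = ∑ x, φ x ^ 2 := by
  have h := (negEquiv n).sum_comp fun x => max (φ x) 0 ^ 2
  simp only [negEquiv_apply, hφ] at h
  rw [two_mul]
  nth_rewrite 1 [← h]
  rw [← sum_add_distrib]
  refine sum_congr rfl fun x _ => ?_
  rcases le_total 0 (φ x) with hx | hx
  · rw [max_eq_right (by linarith), max_eq_left hx]; ring
  · rw [max_eq_left (by linarith), max_eq_right hx]; ring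

/-- `coordSum A i = 2ⁿ · 𝟙̂_A({i})`, the unnormalised level-one Fourier coefficient of `A`. -/
noncomputable def coordSum (A : Finset (Fin n → Bool)) (i : Fin n) : ℝ := ∑ x ∈ A, chi (x i)

lemma sum_coordSum_sq_le_half (A : Finset (Fin n → Bool)) :
    ∑ i, coordSum A i ^ 2 ≤ #A * 2 ^ n / 2 := by
  set W := ∑ i, coordSum A i ^ 2
  set L : (Fin n → Bool) → ℝ := fun x => ∑ i, coordSum A i * chi (x i)
  have hW0 : 0 ≤ W := sum_nonneg fun i _ => sq_nonneg _
  have hL_sum : ∑ x ∈ A, L x = W := by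
    simp only [L, W, coordSum, sq, sum_mul, mul_sum]
    rw [sum_comm]
  have hL_odd : ∀ x, L (neg n x) = -L x := fun x => by
    simp [L, neg, chi_not]
  have hL_pos : 2 * ∑ x, max (L x) 0 ^ 2 = 2 ^ n * W :=
    (sum_max_sq_of_odd hL_odd).trans (sum_linear_sq _)
  have hW : W ^ 2 ≤ #A * (2 ^ n / 2 * W) := calc
    W ^ 2 ≤ (∑ x ∈ A, max (L x) 0) ^ 2 := by
      refine pow_le_pow_left₀ hW0 ?_ 2
      rw [← hL_sum]
      exact sum_le_sum fun x _ => le_max_left _ _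
    _ ≤ #A * ∑ x ∈ A, max (L x) 0 ^ 2 := sq_sum_le_card_mul_sum_sq
    _ ≤ #A * ∑ x, max (L x) 0 ^ 2 := by
      gcongr
      exact subset_univ A
    _ = #A * (2 ^ n / 2 * W) := by linear_combination (#A / 2 : ℝ) * hL_pos
  have hK : (0 : ℝ) ≤ #A * 2 ^ n / 2 := by positivity
  nlinarith [mul_nonneg hK hW0]

noncomputable def marginal (A : Finset (Fin n → Bool)) (i : Fin n) (b : Bool) : ℝ :=
  #(A.filter fun x => x i = b) / #A

lemma sum_comp_apply_eq (A : Finset (Fin n → Bool)) (i : Fin n) (g : Bool → ℝ) :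
    ∑ x ∈ A, g (x i) = #A * ∑ b, marginal A i b * g b := by
  rcases A.eq_empty_or_nonempty with rfl | hA
  · simp
  have hA : (#A : ℝ) ≠ 0 := by exact_mod_cast hA.card_ne_zero
  rw [← sum_fiberwise A (fun x => x i), mul_sum]
  refine sum_congr rfl fun b _ => ?_
  rw [sum_congr rfl fun x hx => by rw [(mem_filter.mp hx).2], sum_const, nsmul_eq_mul, marginal]
  field_simp

lemma sum_marginal {A : Finset (Fin n → Bool)} (hA : A.Nonempty) (i : Fin n) :
    ∑ b, marginal A i b = 1 := by
  have h := sum_comp_apply_eq A i fun _ => 1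
  simp only [mul_one, sum_const, nsmul_eq_mul] at h
  have hA : (#A : ℝ) ≠ 0 := by exact_mod_cast hA.card_ne_zero
  field_simp at h
  linarith

lemma marginal_pos {A : Finset (Fin n → Bool)} {x : Fin n → Bool} (hx : x ∈ A) (i : Fin n) :
    0 < marginal A i (x i) := by
  unfold marginal
  have h1 : 0 < #(A.filter fun y => y i = x i) := card_pos.mpr ⟨x, mem_filter.mpr ⟨hx, rfl⟩⟩
  have h2 : 0 < #A := card_pos.mpr ⟨x, hx⟩
  positivity

lemma coordSum_eq (A : Finset (Fin n → Bool)) (i : Fin n) :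
    coordSum A i = #A * (2 * marginal A i true - 1) := by
  rcases A.eq_empty_or_nonempty with rfl | hA
  · simp [coordSum]
  have h := sum_marginal hA i
  rw [coordSum, sum_comp_apply_eq, Fintype.sum_bool] at *
  simp only [chi, if_true, Bool.false_eq_true, if_false]
  congr 1
  linarith

lemma sum_log_marginal (A : Finset (Fin n → Bool)) (i : Fin n) :
    ∑ x ∈ A, log (marginal A i (x i)) = -#A * binEntropy (marginal A i true) := by
  rcases A.eq_empty_or_nonempty with rfl | hA
  · simp
  have h := sum_marginal hA i
  rw [Fintype.sum_bool] at h
  rw [sum_comp_apply_eq A i (fun b => log (marginal A i b)), Fintype.sum_bool,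
    binEntropy_eq_negMulLog_add_negMulLog_one_sub, ← h, add_sub_cancel_left]
  simp only [negMulLog]
  ring

-- Gibbs' inequality against the product of the marginals of `A`.
lemma log_card_le_sum_binEntropy {A : Finset (Fin n → Bool)} (hA : A.Nonempty) :
    log #A ≤ ∑ i, binEntropy (marginal A i true) := by
  have hsum : ∑ x ∈ A, ∏ i, marginal A i (x i) ≤ 1 := calc
    _ ≤ ∑ x, ∏ i, marginal A i (x i) :=
      sum_le_sum_of_subset_of_nonneg (subset_univ A) fun x _ _ =>
        prod_nonneg fun i _ => by unfold marginal; positivity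
    _ = 1 := by rw [← Fintype.prod_sum]; simp only [sum_marginal hA, prod_const_one]
  have h := card_mul_log_card_le A (fun x hx => prod_pos fun i _ => marginal_pos hx i) hsum
  have hlog : ∀ x ∈ A, log (∏ i, marginal A i (x i)) = ∑ i, log (marginal A i (x i)) :=
    fun x hx => log_prod fun i _ => (marginal_pos hx i).ne'
  rw [sum_congr rfl hlog, sum_comm] at h
  simp only [sum_log_marginal, neg_mul, sum_neg_distrib, neg_neg, ← mul_sum] at h
  have hA' : (0 : ℝ) < #A := by exact_mod_cast hA.card_pos
  exact le_of_mul_le_mul_left h hA'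

lemma sum_coordSum_sq_le_chang (A : Finset (Fin n → Bool)) :
    ∑ i, coordSum A i ^ 2 ≤ 2 * #A ^ 2 * (n * log 2 - log #A) := by
  rcases A.eq_empty_or_nonempty with rfl | hA
  · simp [coordSum]
  calc ∑ i, coordSum A i ^ 2 = #A ^ 2 * ∑ i, (2 * marginal A i true - 1) ^ 2 := by
        simp only [coordSum_eq, mul_pow, mul_sum]
    _ ≤ #A ^ 2 * ∑ i : Fin n, 2 * (log 2 - binEntropy (marginal A i true)) := by
        gcongr with i
        exact sq_two_mul_sub_one_le_binEntropy (by unfold marginal; positivity)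
          (div_le_one_of_le₀ (by exact_mod_cast card_filter_le _ _) (by positivity))
    _ ≤ 2 * #A ^ 2 * (n * log 2 - log #A) := by
        have := log_card_le_sum_binEntropy hA
        simp only [← mul_sum, sum_sub_distrib, sum_const, card_univ, Fintype.card_fin,
          nsmul_eq_mul]
        nlinarith [sq_nonneg (#A : ℝ)]

lemma Pr_eq_card_div (p : (Fin n → Bool) → Prop) [DecidablePred p] :
    Pr n p = #(univ.filter p) / 2 ^ n := by
  rw [Pr, Ex, ← sum_boole]
  congr! 3

lemma sum_Pr_eq_Pr_mem {ι : Type*} (f : (Fin n → Bool) → ι) (s : Finset ι) :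
    ∑ j ∈ s, Pr n (fun y => f y = j) = Pr n (fun y => f y ∈ s) := by
  simp only [Pr, Ex, ← sum_div]
  rw [sum_comm]
  congr 1
  refine sum_congr rfl fun y _ => ?_
  rw [sum_ite_eq]
  congr

lemma Ex_chi_mul_indicator (p : (Fin n → Bool) → Prop) [DecidablePred p] (i : Fin n) :
    Ex n (fun y => chi (y i) * if p y then 1 else 0) = coordSum (univ.filter p) i / 2 ^ n := by
  simp only [Ex, coordSum, mul_ite, mul_one, mul_zero, sum_filter]

lemma sum_sq_coordSum_div_le_half (A : Finset (Fin n → Bool)) :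
    ∑ i, (coordSum A i / 2 ^ n) ^ 2 ≤ (#A : ℝ) / 2 ^ n / 2 := by
  have h := sum_coordSum_sq_le_half A
  simp only [div_pow, ← sum_div]
  rw [div_le_iff₀ (by positivity)]
  calc _ ≤ (#A : ℝ) * 2 ^ n / 2 := h
    _ = _ := by field_simp

lemma sum_sq_coordSum_div_le_changBound (A : Finset (Fin n → Bool)) :
    ∑ i, (coordSum A i / 2 ^ n) ^ 2 ≤ changBound (#A / 2 ^ n) := by
  rcases A.eq_empty_or_nonempty with rfl | hA
  · simp [coordSum, changBound]
  have hA : (0 : ℝ) < #A := by exact_mod_cast hA.card_pos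
  have h := sum_coordSum_sq_le_chang A
  simp only [div_pow, ← sum_div]
  rw [div_le_iff₀ (by positivity)]
  calc _ ≤ _ := h
    _ = _ := by
      rw [changBound, negMulLog, log_div hA.ne' (by positivity), log_pow]
      field_simp
      ring

end BoolCube

open BoolCube

/-- if the 8 most likely values of `f` miss mass ≥ 0.009079, then the
level-one Fourier mass Σ_{i,j} F_{ij}² is < 0.4962357. -/
theorem stmt15 (n : ℕ) (f : (Fin n → Bool) → Fin n)
    (F : Fin n → Fin n → ℝ)
    (hF : ∀ i j, F i j = Ex n (fun y => chi (y i) * (if f y = j then 1 else 0)))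
    (a : Fin n → ℝ) (ha : ∀ j, a j = Pr n (fun y => f y = j))
    (Ω : Finset (Fin n)) (hcard : Ω.card = min 8 n)
    (hlargest : ∀ j ∈ Ω, ∀ j' ∉ Ω, a j' ≤ a j)
    (hmiss : 0.009079 ≤ Pr n (fun y => f y ∉ Ω)) :
    ∑ i : Fin n, ∑ j : Fin n, (F i j) ^ 2 < 0.4962357 := by
  have hFA : ∀ i j, F i j = coordSum (univ.filter fun y => f y = j) i / 2 ^ n := fun i j =>
    (hF i j).trans (Ex_chi_mul_indicator _ i)
  have haA : ∀ j, a j = #(univ.filter fun y => f y = j) / 2 ^ n := fun j =>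
    (ha j).trans (Pr_eq_card_div _)
  have hsum : ∑ j, a j = 1 := by
    simp only [ha, sum_Pr_eq_Pr_mem]
    simp [Pr_eq_card_div]
  have htail : Pr n (fun y => f y ∉ Ω) = ∑ j ∈ Ωᶜ, a j := by
    simp only [ha, sum_Pr_eq_Pr_mem, mem_compl]
  rw [sum_comm]
  refine sum_lt_of_le_half_of_le_changBound (a := a) (fun j => ?_) hsum (fun j => ?_)
    (fun j => ?_) (by simpa using hcard) hlargest (hmiss.trans_eq htail)
  · rw [haA]; positivity
  · simp only [hFA, haA]; exact sum_sq_coordSum_div_le_half _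
  · simp only [hFA, haA]; exact sum_sq_coordSum_div_le_changBound _
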